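/- arXiv:2111.12660 — 2 statements merged into one kernel-verified Lean document; each statement's English description precedes it below -/
import Mathlib

section
/- Let Σ be a compact subset of ℝ and let μ be a Borel probability measure with support contained in Σ. Suppose P₁, P₂, … is an infinite sequence of distinct irreducible monic integer polynomials such that the support of the counting measure μ_{P_k} is contained in Σ for every k and the sequence μ_{P₁}, μ_{P₂}, … weak-* converges to μ. Then ∫_Σ log|Q(x)| dμ(x) ≥ 0 for every nonzero integer polynomial Q. -/
open MeasureTheory Polynomial Filter
open scoped ENNReal NNReal

/-- The logarithmic potential `U^μ(x) = ∫ -log|x - t| dμ(t)` of a measure on `ℝ`. -/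
noncomputable def potential (μ : Measure ℝ) (x : ℝ) : ℝ := ∫ t, -Real.log |x - t| ∂μ

/-- The positive part of the energy integral `I(μ) = ∫∫ -log|x-y| dμ dμ`
(with value `∞` on the diagonal, where `-log 0 = ∞`). -/
noncomputable def energyPos (μ : Measure ℝ) : ℝ≥0∞ :=
  ∫⁻ p : ℝ × ℝ, (if p.1 = p.2 then ⊤ else ENNReal.ofReal (-Real.log |p.1 - p.2|)) ∂(μ.prod μ)

/-- The negative part of the energy integral `I(μ) = ∫∫ -log|x-y| dμ dμ`. -/
noncomputable def energyNeg (μ : Measure ℝ) : ℝ≥0∞ :=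
  ∫⁻ p : ℝ × ℝ, ENNReal.ofReal (Real.log |p.1 - p.2|) ∂(μ.prod μ)

/-- The energy `I(μ)`, as a real number (junk value when the energy is infinite). -/
noncomputable def energyR (μ : Measure ℝ) : ℝ := (energyPos μ).toReal - (energyNeg μ).toReal

/-- The logarithmic capacity of a set of reals: `sup e^{-I(μ)}` over Borel probability
measures supported in `S`. -/
noncomputable def capacity (S : Set ℝ) : ℝ :=
  ⨆ μ : {μ : Measure ℝ // IsProbabilityMeasure μ ∧ μ Sᶜ = 0},
    if energyPos μ.1 = ⊤ then 0
    else Real.exp ((energyNeg μ.1).toReal - (energyPos μ.1).toReal)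

/-- A Borel measure on `ℝ` is Hölder if `μ([x,y]) ≤ A |y - x|^η` for some `A, η > 0`. -/
def HolderMeasure (μ : Measure ℝ) : Prop :=
  ∃ A η : ℝ, 0 < A ∧ 0 < η ∧
    ∀ x y : ℝ, x ≤ y → (μ (Set.Icc x y)).toReal ≤ A * (y - x) ^ η

/-- A compact finite union of intervals: a nonempty compact subset of `ℝ` with finitely
many connected components and no isolated points. -/
def IsCFUI (S : Set ℝ) : Prop :=
  IsCompact S ∧ S.Nonempty ∧
    {C : Set ℝ | ∃ x ∈ S, C = connectedComponentIn S x}.Finite ∧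
    ∀ x ∈ S, AccPt x (𝓟 S)

/-- The `n`-norm `max_{x ∈ S} e^{n U^μ(x)} |P(x)|` of a complex polynomial with respect
to `(μ, S)`. -/
noncomputable def nNorm (μ : Measure ℝ) (S : Set ℝ) (n : ℕ) (P : Polynomial ℂ) : ℝ :=
  ⨆ x : S, Real.exp ((n : ℝ) * potential μ x) * ‖P.eval ((x : ℝ) : ℂ)‖

/-- The counting measure `μ_P = (1/deg P) ∑ δ_root` of a complex polynomial. -/
noncomputable def rootMeasure (P : Polynomial ℂ) : Measure ℂ :=
  ((P.natDegree : ℝ≥0∞))⁻¹ • (P.roots.map (fun z => (Measure.dirac z : Measure ℂ))).sum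

/-- Weak-* convergence of a sequence of measures on `ℂ`. -/
def WeakStarTendstoC (ν : ℕ → Measure ℂ) (μ : Measure ℂ) : Prop :=
  ∀ f : ℂ → ℝ, Continuous f →
    Tendsto (fun k => ∫ z, f z ∂(ν k)) atTop (nhds (∫ z, f z ∂μ))

/-- Weak-* convergence of a sequence of measures on `ℝ`. -/
def WeakStarTendsto (ν : ℕ → Measure ℝ) (μ : Measure ℝ) : Prop :=
  ∀ f : ℝ → ℝ, Continuous f →
    Tendsto (fun k => ∫ x, f x ∂(ν k)) atTop (nhds (∫ x, f x ∂μ))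

/-!
For a monic irreducible `P ∈ ℤ[X]` not dividing `Q`, the product of `Q` over the roots of `P`
is the resultant `Res(P, Q)`, a nonzero integer, so
`∫ log |Q| dμ_P = log |Res(P, Q)| / deg P ≥ 0`; and only finitely many of the distinct `P_k`
divide `Q`. As `log |Q|` is not continuous, the weak-* convergence is applied to the continuous
truncations `log (max (|Q|, eᶜ))`: they dominate `log |Q|` at the roots of every `P_k` and are
dominated by `max (log |Q|, c)`, whose integrals tend to `∫ log |Q| dμ` as `c → -∞`.
-/

open scoped Topology

namespace Polynomial

variable {R : Type*} [CommRing R]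

theorem Monic.prod_roots_aeval_eq_resultant {K : Type*} [Field K] [IsAlgClosed K] [Algebra R K]
    {P : R[X]} (hP : P.Monic) (Q : R[X]) :
    ((P.map (algebraMap R K)).roots.map fun α => aeval α Q).prod =
      algebraMap R K (resultant P Q) := by
  have h := resultant_eq_prod_eval (P.map (algebraMap R K)) (Q.map (algebraMap R K)) Q.natDegree
    natDegree_map_le (IsAlgClosed.splits _)
  rw [resultant_map_map, (hP.map _).leadingCoeff, one_pow, one_mul, hP.natDegree_map] at h
  simp_rw [aeval_def, eval₂_eq_eval_map]
  exact h.symm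

theorem Monic.resultant_ne_zero_of_not_dvd [IsDomain R] [IsIntegrallyClosed R] {P Q : R[X]}
    (hP : P.Monic) (hirr : Irreducible P) (hdvd : ¬ P ∣ Q) : resultant P Q ≠ 0 := by
  let K := FractionRing R
  have hinj : Function.Injective (algebraMap R K) := IsFractionRing.injective R K
  have hcop : IsCoprime (P.map (algebraMap R K)) (Q.map (algebraMap R K)) :=
    ((hP.irreducible_iff_irreducible_map_fraction_map.mp hirr).coprime_iff_not_dvd).mpr
      fun h => hdvd ((map_dvd_map _ hinj hP).mp h)
  have := resultant_ne_zero _ _ hcop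
  rwa [natDegree_map_eq_of_injective hinj, natDegree_map_eq_of_injective hinj, resultant_map_map,
    map_ne_zero_iff _ hinj] at this

theorem finite_setOf_monic_irreducible_dvd [IsDomain R] [NormalizationMonoid R]
    [UniqueFactorizationMonoid R[X]] {Q : R[X]} (hQ : Q ≠ 0) :
    {P : R[X] | P.Monic ∧ Irreducible P ∧ P ∣ Q}.Finite := by
  classical
  refine (UniqueFactorizationMonoid.normalizedFactors Q).toFinset.finite_toSet.subset ?_
  rintro P ⟨hP, hirr, hdvd⟩
  exact Multiset.mem_toFinset.mpr <|
    (UniqueFactorizationMonoid.mem_normalizedFactors_iff' hQ).mpr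
      ⟨hirr, hP.normalize_eq_self, hdvd⟩

end Polynomial

section Truncation

variable {α E : Type*} [NormedAddCommGroup E]

/-- Unlike `max (Real.log ‖f x‖) c`, this is continuous wherever `f` is, also at the zeros
of `f` (where `Real.log 0 = 0`). -/
noncomputable def truncatedLogNorm (f : α → E) (c : ℝ) (x : α) : ℝ :=
  Real.log (max ‖f x‖ (Real.exp c))

theorem truncatedLogNorm_of_ne_zero (f : α → E) (c : ℝ) {x : α} (hx : f x ≠ 0) :
    truncatedLogNorm f c x = max (Real.log ‖f x‖) c := by
  have hpos : 0 < ‖f x‖ := norm_pos_iff.mpr hx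
  rcases le_total ‖f x‖ (Real.exp c) with h | h
  · rw [truncatedLogNorm, max_eq_right h, Real.log_exp,
      max_eq_right ((Real.log_le_log hpos h).trans_eq (Real.log_exp c))]
  · rw [truncatedLogNorm, max_eq_left h,
      max_eq_left ((Real.log_exp c).symm.trans_le (Real.log_le_log (Real.exp_pos c) h))]

theorem le_truncatedLogNorm (f : α → E) (c : ℝ) (x : α) : c ≤ truncatedLogNorm f c x :=
  (Real.log_exp c).symm.trans_le (Real.log_le_log (Real.exp_pos c) (le_max_right _ _))

theorem truncatedLogNorm_le_max (f : α → E) (c : ℝ) (x : α) :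
    truncatedLogNorm f c x ≤ max (Real.log ‖f x‖) c := by
  by_cases hx : f x = 0
  · simp [truncatedLogNorm, hx, (Real.exp_pos c).le]
  · exact (truncatedLogNorm_of_ne_zero f c hx).le

theorem Continuous.truncatedLogNorm [TopologicalSpace α] {f : α → E} (hf : Continuous f)
    (c : ℝ) : Continuous (truncatedLogNorm f c) :=
  (hf.norm.max continuous_const).log fun _ => (lt_max_of_lt_right (Real.exp_pos c)).ne'

theorem integrable_truncatedLogNorm [MeasurableSpace α] {μ : Measure α}
    [IsFiniteMeasure μ] {f : α → E} (hf : AEStronglyMeasurable f μ)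
    (hlog : Integrable (fun x => Real.log ‖f x‖) μ) (c : ℝ) :
    Integrable (truncatedLogNorm f c) μ := by
  refine Integrable.mono' (hlog.abs.add (integrable_const |c|))
    (hf.norm.aemeasurable.max aemeasurable_const).log.aestronglyMeasurable
    (Eventually.of_forall fun x => abs_le.mpr ⟨?_, ?_⟩) <;> simp only [Pi.add_apply]
  · linarith [neg_abs_le c, abs_nonneg (Real.log ‖f x‖), le_truncatedLogNorm f c x]
  · linarith [truncatedLogNorm_le_max f c x,
      max_le_max (le_abs_self (Real.log ‖f x‖)) (le_abs_self c),
      max_le_add_of_nonneg (abs_nonneg (Real.log ‖f x‖)) (abs_nonneg c)]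

end Truncation

namespace MeasureTheory

variable {α : Type*} [MeasurableSpace α]

theorem tendsto_integral_max_atBot {μ : Measure α} {g : α → ℝ} (hg : Integrable g μ) :
    Tendsto (fun c => ∫ x, max (g x) c ∂μ) atBot (𝓝 (∫ x, g x ∂μ)) := by
  refine tendsto_integral_filter_of_dominated_convergence (fun x => |g x|)
    (Eventually.of_forall fun c => hg.aestronglyMeasurable.sup aestronglyMeasurable_const) ?_
    hg.abs (Eventually.of_forall fun x => tendsto_const_nhds.congr' ?_)
  · filter_upwards [eventually_le_atBot 0] with c hc
    exact Eventually.of_forall fun x => abs_le.mpr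
      ⟨(neg_abs_le _).trans (le_max_left _ _), max_le (le_abs_self _) (hc.trans (abs_nonneg _))⟩
  · filter_upwards [eventually_le_atBot (g x)] with c hc using (max_eq_left hc).symm

variable [MeasurableSingletonClass α] {E : Type*} [NormedAddCommGroup E]

theorem integrable_multiset_sum_dirac (f : α → E) (s : Multiset α) :
    Integrable f (s.map Measure.dirac).sum := by
  induction s using Multiset.induction_on with
  | empty => simp
  | cons a s ih =>
    rw [Multiset.map_cons, Multiset.sum_cons]
    exact (integrable_dirac enorm_lt_top).add_measure ih

theorem integral_multiset_sum_dirac [NormedSpace ℝ E] [CompleteSpace E] (f : α → E)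
    (s : Multiset α) : ∫ x, f x ∂(s.map Measure.dirac).sum = (s.map f).sum := by
  induction s using Multiset.induction_on with
  | empty => simp
  | cons a s ih =>
    rw [Multiset.map_cons, Multiset.sum_cons, integral_add_measure (integrable_dirac enorm_lt_top)
      (integrable_multiset_sum_dirac f s), integral_dirac, ih, Multiset.map_cons, Multiset.sum_cons]

end MeasureTheory

theorem integral_rootMeasure (q : ℂ[X]) (f : ℂ → ℝ) :
    ∫ z, f z ∂rootMeasure q = (q.natDegree : ℝ)⁻¹ * (q.roots.map f).sum := by
  rw [rootMeasure, integral_smul_measure, integral_multiset_sum_dirac, ENNReal.toReal_inv,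
    ENNReal.toReal_natCast, smul_eq_mul]

theorem Polynomial.Monic.sum_truncatedLogNorm_roots_nonneg {P Q : ℤ[X]} (hP : P.Monic)
    (hres : resultant P Q ≠ 0) (c : ℝ) :
    0 ≤ ((P.map (Int.castRingHom ℂ)).roots.map
      (truncatedLogNorm (fun z => aeval z Q) c)).sum := by
  set roots := (P.map (Int.castRingHom ℂ)).roots
  have hprod : (roots.map fun α => aeval α Q).prod = resultant P Q := by
    simpa using hP.prod_roots_aeval_eq_resultant (K := ℂ) Q
  have hne : ∀ α ∈ roots, aeval α Q ≠ 0 := fun α hα h0 =>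
    hres <| by
      exact_mod_cast hprod ▸ Multiset.prod_eq_zero (Multiset.mem_map.mpr ⟨α, hα, h0⟩)
  have hnorm :
      ‖(roots.map fun α => aeval α Q).prod‖ = (roots.map fun α => ‖aeval α Q‖).prod :=
    (map_multiset_prod (normHom : ℂ →*₀ ℝ) _).trans (congrArg _ (Multiset.map_map _ _ _))
  calc (0 : ℝ) ≤ Real.log ‖((resultant P Q : ℤ) : ℂ)‖ :=
        Real.log_nonneg (by rw [Complex.norm_intCast]; exact_mod_cast Int.one_le_abs hres)
    _ = (roots.map fun α => Real.log ‖aeval α Q‖).sum := by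
        rw [← hprod, hnorm, Real.log_multiset_prod (by simpa using hne), Multiset.map_map]
        rfl
    _ ≤ _ := Multiset.sum_map_le_sum_map _ _ fun α hα =>
        (truncatedLogNorm_of_ne_zero _ c (hne α hα)).symm ▸ le_max_left _ _

theorem Polynomial.Monic.integral_truncatedLogNorm_rootMeasure_nonneg {P Q : ℤ[X]} (hP : P.Monic)
    (hres : resultant P Q ≠ 0) (c : ℝ) :
    0 ≤ ∫ z, truncatedLogNorm (fun z => aeval z Q) c z
      ∂rootMeasure (P.map (Int.castRingHom ℂ)) := by
  rw [integral_rootMeasure]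
  exact mul_nonneg (by positivity) (hP.sum_truncatedLogNorm_roots_nonneg hres c)

theorem integral_log_nonneg_of_tendsto_general
    (μ : Measure ℂ) (hprob : IsProbabilityMeasure μ)
    (P : ℕ → Polynomial ℤ) (hinj : Function.Injective P)
    (hmonic : ∀ k, (P k).Monic) (hirr : ∀ k, Irreducible (P k))
    (htend : WeakStarTendstoC (fun k => rootMeasure ((P k).map (Int.castRingHom ℂ))) μ) :
    ∀ Q : Polynomial ℤ, Q ≠ 0 →
      0 ≤ ∫ z, Real.log ‖Polynomial.aeval z Q‖ ∂μ := by
  intro Q hQ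
  by_cases hlog : Integrable (fun z => Real.log ‖aeval z Q‖) μ
  swap
  · rw [integral_undef hlog]
  have hcont : Continuous fun z : ℂ => aeval z Q := Q.continuous_aeval
  have hnot_dvd : ∀ᶠ k in atTop, ¬ P k ∣ Q := by
    rw [← Nat.cofinite_eq_atTop]
    exact ((finite_setOf_monic_irreducible_dvd hQ).preimage hinj.injOn)
      |>.eventually_cofinite_notMem.mono fun k hk hdvd => hk ⟨hmonic k, hirr k, hdvd⟩
  refine ge_of_tendsto (tendsto_integral_max_atBot hlog) (Eventually.of_forall fun c => ?_)
  have htrunc : 0 ≤ ∫ z, truncatedLogNorm (fun z => aeval z Q) c z ∂μ :=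
    ge_of_tendsto (htend _ (hcont.truncatedLogNorm c)) <| hnot_dvd.mono fun k hk =>
      (hmonic k).integral_truncatedLogNorm_rootMeasure_nonneg
        ((hmonic k).resultant_ne_zero_of_not_dvd (hirr k) hk) c
  exact htrunc.trans <| integral_mono
    (integrable_truncatedLogNorm hcont.aestronglyMeasurable hlog c)
    (hlog.sup (integrable_const c)) (truncatedLogNorm_le_max _ c)

/-- **Theorem 1.6, (2) ⟹ (1) (Serre).**  Let `Σ ⊆ ℝ` be compact and let `μ` be a Borel
probability measure supported in `Σ`.  If there is an infinite sequence of distinct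
irreducible monic integer polynomials whose counting measures are supported in `Σ` and
weak-* converge to `μ`, then `∫ log|Q| dμ ≥ 0` for every nonzero integer polynomial
`Q`. -/
theorem integral_log_nonneg_of_tendsto
    (S : Set ℝ) (hS : IsCompact S)
    (μ : Measure ℂ) (hprob : IsProbabilityMeasure μ)
    (hsupp : μ ((Complex.ofReal '' S)ᶜ) = 0)
    (P : ℕ → Polynomial ℤ) (hinj : Function.Injective P)
    (hmonic : ∀ k, (P k).Monic) (hirr : ∀ k, Irreducible (P k))
    (hPsupp : ∀ k, rootMeasure ((P k).map (Int.castRingHom ℂ)) ((Complex.ofReal '' S)ᶜ) = 0)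
    (htend : WeakStarTendstoC (fun k => rootMeasure ((P k).map (Int.castRingHom ℂ))) μ) :
    ∀ Q : Polynomial ℤ, Q ≠ 0 →
      0 ≤ ∫ z, Real.log ‖Polynomial.aeval z Q‖ ∂μ :=
  integral_log_nonneg_of_tendsto_general μ hprob P hinj hmonic hirr htend
end

section
/- Let k and n be positive integers and let Q₁, …, Q_k be nonzero complex polynomials of degree at most n, with at least one of degree exactly n. Then there exist nonnegative integers b₂, …, b_k, each no larger than n(k+2), such that Q₁ + b₂Q₂ + ⋯ + b_kQ_k has degree n and has a decomposition QR, where Q divides Q_i for each i ≤ k and R is a squarefree polynomial coprime to each Q_i. -/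
/-!
The combination is built one summand at a time, keeping a factorisation `D * R` of the partial
sum with `D` dividing the summands used so far and `R` squarefree and coprime to `M = ∏ Qᵢ`.
To add `t • Q`, split off `g = gcd D Q`: the new sum is `g * (A + t B)` with `A = (D / g) R` and
`B = Q / g` coprime. In such a pencil, a common root `β` of `A + t B` with `M`, or with its
derivative, forces `t = -A(β) / B(β)`, and in the second case `β` is a root of the Wronskian
`A B' - A' B`, of degree `< 2n`. Together with the one value of `t` that cancels the leading
term, at most `deg M + 2n ≤ n k + 2n` values of `t` are bad.
-/

open Polynomial

theorem Fin.sup_univ_castSucc {α : Type*} [SemilatticeSup α] [OrderBot α] {m : ℕ}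
    (f : Fin (m + 1) → α) :
    Finset.univ.sup f = Finset.univ.sup (fun i : Fin m => f i.castSucc) ⊔ f (Fin.last m) := by
  rw [Fin.univ_castSuccEmb, Finset.sup_cons, Finset.sup_map, sup_comm]
  rfl

theorem Finset.exists_natCast_le_card_notMem {K : Type*} [AddMonoidWithOne K] [CharZero K]
    (s : Finset K) : ∃ t : ℕ, t ≤ s.card ∧ (t : K) ∉ s := by
  classical
  have hcard : s.card < ((Finset.range (s.card + 1)).image (Nat.cast : ℕ → K)).card := by
    rw [Finset.card_image_of_injective _ Nat.cast_injective, Finset.card_range]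
    exact Nat.lt_succ_self _
  obtain ⟨_, hmem, hts⟩ := Finset.exists_mem_notMem_of_card_lt_card hcard
  obtain ⟨t, ht, rfl⟩ := Finset.mem_image.mp hmem
  exact ⟨t, Nat.lt_succ_iff.mp (Finset.mem_range.mp ht), hts⟩

namespace Polynomial

variable {K : Type*} [Field K] {A B M : K[X]} {x : K}

theorem _root_.IsCoprime.eq_neg_div_of_isRoot_add_C_mul (hAB : IsCoprime A B) {β : K}
    (h : (A + C x * B).IsRoot β) : x = -A.eval β / B.eval β := by
  simp only [IsRoot, eval_add, eval_mul, eval_C] at h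
  have hB : B.eval β ≠ 0 := by
    intro hB
    rw [hB, mul_zero, add_zero] at h
    simpa [h, hB] using aeval_ne_zero_of_isCoprime hAB β
  rw [eq_div_iff hB]
  linear_combination h

theorem isRoot_wronskian_of_isRoot_add_C_mul {β : K} (h : (A + C x * B).IsRoot β)
    (h' : (derivative (A + C x * B)).IsRoot β) : (wronskian A B).IsRoot β := by
  simp only [IsRoot, eval_add, eval_mul, eval_C, derivative_add, derivative_mul,
    derivative_C, zero_mul, zero_add] at h h'
  simp only [IsRoot, wronskian, eval_sub, eval_mul]
  linear_combination (derivative B).eval β * h - B.eval β * h'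

theorem coeff_max_natDegree_add_C_mul_ne_zero (hA : A ≠ 0)
    (hx : x ≠ -A.coeff (max A.natDegree B.natDegree) / B.coeff (max A.natDegree B.natDegree)) :
    (A + C x * B).coeff (max A.natDegree B.natDegree) ≠ 0 := by
  set d := max A.natDegree B.natDegree
  rw [coeff_add, coeff_C_mul]
  by_cases hBd : B.coeff d = 0
  · have hAd : d = A.natDegree := by
      by_contra hne
      have hdB : d = B.natDegree := by omega
      have hB : B = 0 := leadingCoeff_eq_zero.mp (by rwa [leadingCoeff, ← hdB])
      simp [hB] at hdB
      omega
    rw [hBd, mul_zero, add_zero, hAd]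
    exact leadingCoeff_ne_zero.mpr hA
  · contrapose! hx
    rw [eq_div_iff hBd]
    linear_combination hx

theorem natDegree_add_C_mul_eq_max (hA : A ≠ 0)
    (hx : x ≠ -A.coeff (max A.natDegree B.natDegree) / B.coeff (max A.natDegree B.natDegree)) :
    (A + C x * B).natDegree = max A.natDegree B.natDegree :=
  le_antisymm
    ((natDegree_add_le _ _).trans (max_le_max le_rfl (natDegree_C_mul_le _ _)))
    (le_natDegree_of_ne_zero (coeff_max_natDegree_add_C_mul_ne_zero hA hx))

section IsAlgClosed

variable [IsAlgClosed K]

theorem separable_add_C_mul [CharZero K] (hAB : IsCoprime A B) (hP : A + C x * B ≠ 0)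
    (hx : ∀ β ∈ (wronskian A B).roots, x ≠ -A.eval β / B.eval β) :
    (A + C x * B).Separable := by
  by_cases hW : wronskian A B = 0
  · obtain ⟨hA', hB'⟩ := hAB.wronskian_eq_zero_iff.mp hW
    have hP' : derivative (A + C x * B) = 0 := by simp [hA', hB']
    rw [separable_def, hP', isCoprime_zero_right, eq_C_of_derivative_eq_zero hP', isUnit_C,
      isUnit_iff_ne_zero]
    rw [eq_C_of_derivative_eq_zero hP'] at hP
    exact fun h => hP (by rw [h, map_zero])
  · rw [separable_def, isCoprime_iff_aeval_ne_zero_of_isAlgClosed K K]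
    intro β
    by_contra! h
    simp only [coe_aeval_eq_eval] at h
    exact hx β ((mem_roots hW).mpr (isRoot_wronskian_of_isRoot_add_C_mul h.1 h.2))
      (hAB.eq_neg_div_of_isRoot_add_C_mul h.1)

theorem isCoprime_add_C_mul (hAB : IsCoprime A B) (hM : M ≠ 0)
    (hx : ∀ α ∈ M.roots, x ≠ -A.eval α / B.eval α) : IsCoprime (A + C x * B) M := by
  rw [isCoprime_iff_aeval_ne_zero_of_isAlgClosed K K]
  intro α
  by_contra! h
  simp only [coe_aeval_eq_eval] at h
  exact hx α ((mem_roots hM).mpr h.2) (hAB.eq_neg_div_of_isRoot_add_C_mul h.1)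

theorem exists_nat_le_squarefree_add_nsmul [CharZero K] (hAB : IsCoprime A B) (hA : A ≠ 0)
    (hM : M ≠ 0) {n : ℕ} (hn : 0 < n) (hAn : A.natDegree ≤ n) (hBn : B.natDegree ≤ n) :
    ∃ t : ℕ, t ≤ M.natDegree + 2 * n ∧ (A + t • B).natDegree = max A.natDegree B.natDegree ∧
      Squarefree (A + t • B) ∧ IsCoprime (A + t • B) M := by
  classical
  set d := max A.natDegree B.natDegree
  -- the values of `t` that lower the degree, create a common root with `M`, or a double root
  let bad : Finset K := insert (-A.coeff d / B.coeff d)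
    ((M.roots + (wronskian A B).roots).toFinset.image fun β => -A.eval β / B.eval β)
  have hW : (wronskian A B).roots.card < 2 * n := by
    by_cases hW : wronskian A B = 0
    · simp [hW, hn]
    · exact (card_roots' _).trans_lt ((natDegree_wronskian_lt_add hW).trans_le (by omega))
  have hbad : bad.card ≤ M.natDegree + 2 * n := by
    calc bad.card ≤ (M.roots + (wronskian A B).roots).toFinset.card + 1 :=
          (Finset.card_insert_le _ _).trans (Nat.add_le_add_right Finset.card_image_le 1)
      _ ≤ M.roots.card + (wronskian A B).roots.card + 1 := by
          gcongr; exact (Multiset.toFinset_card_le _).trans (Multiset.card_add _ _).le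
      _ ≤ M.natDegree + 2 * n := by have := card_roots' M; omega
  obtain ⟨t, htbad, ht⟩ := bad.exists_natCast_le_card_notMem
  simp only [bad, Finset.mem_insert, Finset.mem_image, Multiset.mem_toFinset, Multiset.mem_add,
    not_or, not_exists, not_and] at ht
  obtain ⟨hdeg, hroots⟩ := ht
  have hP : A + C (t : K) * B ≠ 0 := fun h =>
    coeff_max_natDegree_add_C_mul_ne_zero hA hdeg (by rw [h, coeff_zero])
  refine ⟨t, htbad.trans hbad, ?_⟩
  rw [nsmul_eq_mul, ← C_eq_natCast]
  exact ⟨natDegree_add_C_mul_eq_max hA hdeg,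
    (separable_add_C_mul hAB hP fun β hβ h => hroots β (Or.inr hβ) h.symm).squarefree,
    isCoprime_add_C_mul hAB hM fun α hα h => hroots α (Or.inl hα) h.symm⟩

theorem exists_nat_le_mul_add_nsmul_eq_mul [CharZero K] {D R Q : K[X]} {n : ℕ} (hn : 0 < n)
    (hD0 : D ≠ 0) (hR : R ≠ 0) (hRM : IsCoprime R M) (hQ : Q ≠ 0) (hQM : Q ∣ M) (hM : M ≠ 0)
    (hDR : (D * R).natDegree ≤ n) (hQn : Q.natDegree ≤ n) :
    ∃ t : ℕ, t ≤ M.natDegree + 2 * n ∧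
      (D * R + t • Q).natDegree = max (D * R).natDegree Q.natDegree ∧
      ∃ g R', D * R + t • Q = g * R' ∧ g ∣ D ∧ g ∣ Q ∧ Squarefree R' ∧ IsCoprime R' M := by
  classical
  obtain ⟨c, q, hc, hq, hcq⟩ := extract_gcd D Q
  generalize gcd D Q = g at hc hq
  subst hc hq
  have hg : g ≠ 0 := left_ne_zero_of_mul hD0
  have hcR : c * R ≠ 0 := mul_ne_zero (right_ne_zero_of_mul hD0) hR
  have hq0 : q ≠ 0 := right_ne_zero_of_mul hQ
  have hAB : IsCoprime (c * R) q := ((gcd_isUnit_iff c q).mp hcq).mul_left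
    (hRM.of_isCoprime_of_dvd_right (dvd_of_mul_left_dvd hQM))
  rw [mul_assoc, natDegree_mul hg hcR] at hDR ⊢
  rw [natDegree_mul hg hq0] at hQn ⊢
  obtain ⟨t, ht, hdeg, hsq, hcop⟩ :=
    exists_nat_le_squarefree_add_nsmul hAB hcR hM hn (by omega) (by omega)
  have hfac : g * (c * R) + t • (g * q) = g * (c * R + t • q) := by
    rw [mul_add, mul_smul_comm]
  refine ⟨t, ht, ?_, g, _, hfac, dvd_mul_right g c, dvd_mul_right g q, hsq, hcop⟩
  rw [hfac, natDegree_mul hg hsq.ne_zero, hdeg, max_add_add_left]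

theorem exists_sum_nsmul_eq_mul_squarefree [CharZero K] {m n : ℕ} (hn : 0 < n)
    (Qs : Fin (m + 1) → K[X]) (hQ0 : ∀ i, Qs i ≠ 0) (hdeg : ∀ i, (Qs i).natDegree ≤ n)
    (hM : M ≠ 0) (hQM : ∀ i, Qs i ∣ M) :
    ∃ b : Fin (m + 1) → ℕ, b 0 = 1 ∧ (∀ i, b i ≤ M.natDegree + 2 * n) ∧
      (∑ i, b i • Qs i).natDegree = Finset.univ.sup (fun i => (Qs i).natDegree) ∧
      ∃ D R, ∑ i, b i • Qs i = D * R ∧ (∀ i, D ∣ Qs i) ∧ Squarefree R ∧ IsCoprime R M := by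
  induction m with
  | zero =>
    refine ⟨fun _ => 1, rfl, fun _ => show 1 ≤ _ by omega, by simp, Qs 0, 1, by simp,
      fun i => by rw [Fin.fin_one_eq_zero i], squarefree_one, isCoprime_one_left⟩
  | succ m ih =>
    obtain ⟨b, hb0, hb, hdegS, D, R, hS, hD, hR, hRM⟩ :=
      ih (fun i => Qs i.castSucc) (fun i => hQ0 _) (fun i => hdeg _) (fun i => hQM _)
    have hSn : (D * R).natDegree ≤ n := hS ▸ hdegS ▸ Finset.sup_le fun i _ => hdeg _
    obtain ⟨t, ht, hdeg', D', R', hS', hD'D, hD'Q, hR', hR'M⟩ :=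
      exists_nat_le_mul_add_nsmul_eq_mul hn (ne_zero_of_dvd_ne_zero (hQ0 0) (hD 0)) hR.ne_zero
        hRM (hQ0 (Fin.last _)) (hQM _) hM hSn (hdeg _)
    have hsum : ∑ i, Fin.snoc (α := fun _ => ℕ) b t i • Qs i = D * R + t • Qs (Fin.last _) := by
      rw [Fin.sum_univ_castSucc]
      simp only [Fin.snoc_castSucc, Fin.snoc_last, hS]
    refine ⟨Fin.snoc (α := fun _ => ℕ) b t, by simpa using hb0, fun i => ?_, ?_, D', R',
      hsum.trans hS',
      fun i => Fin.lastCases (motive := fun i => D' ∣ Qs i) hD'Q (fun i => hD'D.trans (hD i)) i,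
      hR', hR'M⟩
    · exact Fin.lastCases (by simpa using ht) (fun i => by simpa using hb i) i
    · rw [hsum, hdeg', ← hS, hdegS, Fin.sup_univ_castSucc fun i => (Qs i).natDegree]

end IsAlgClosed

end Polynomial

/-- **Lemma 2.9.**  Let `k, n` be positive integers and `Q₁, …, Q_k` nonzero complex
polynomials of degree at most `n`, at least one of degree exactly `n`.  Then there are
nonnegative integers `b₂, …, b_k`, each at most `n(k+2)`, so that
`Q₁ + b₂ Q₂ + ⋯ + b_k Q_k` has degree `n` and factors as `Q · R` with `Q` dividing each
`Q_i` and `R` squarefree and coprime to each `Q_i`. -/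
theorem squarefree_combination (k n : ℕ) (hk : 0 < k) (hn : 0 < n)
    (Qs : Fin k → Polynomial ℂ) (hQ0 : ∀ i, Qs i ≠ 0)
    (hdeg : ∀ i, (Qs i).natDegree ≤ n) (hex : ∃ i, (Qs i).natDegree = n) :
    ∃ b : Fin k → ℕ, b ⟨0, hk⟩ = 1 ∧ (∀ i, i ≠ ⟨0, hk⟩ → b i ≤ n * (k + 2)) ∧
      (∑ i, b i • Qs i).natDegree = n ∧
      ∃ Q R : Polynomial ℂ, (∑ i, b i • Qs i) = Q * R ∧
        (∀ i, Q ∣ Qs i) ∧ Squarefree R ∧ ∀ i, IsCoprime R (Qs i) := by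
  obtain ⟨m, rfl⟩ := Nat.exists_eq_add_one_of_ne_zero hk.ne'
  have hQM : ∀ i, Qs i ∣ ∏ j, Qs j := fun i => Finset.dvd_prod_of_mem _ (Finset.mem_univ i)
  have hMdeg : (∏ j, Qs j).natDegree ≤ (m + 1) * n :=
    (natDegree_prod_le _ _).trans ((Finset.sum_le_sum fun i _ => hdeg i).trans (by simp))
  obtain ⟨b, hb0, hb, hdegS, D, R, hS, hD, hR, hRM⟩ := exists_sum_nsmul_eq_mul_squarefree hn Qs
    hQ0 hdeg (Finset.prod_ne_zero_iff.mpr fun i _ => hQ0 i) hQM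
  obtain ⟨i₀, hi₀⟩ := hex
  refine ⟨b, hb0, fun i _ => (hb i).trans (by linarith), ?_, D, R, hS, hD, hR,
    fun i => hRM.of_isCoprime_of_dvd_right (hQM i)⟩
  rw [hdegS]
  exact le_antisymm (Finset.sup_le fun i _ => hdeg i)
    (hi₀ ▸ Finset.le_sup (f := fun i => (Qs i).natDegree) (Finset.mem_univ i₀))
end
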